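/- Absoluteness of check-names: (i) for the two-element Boolean algebra 2, for any negation-free sentence ψ(x₁,…,xₙ) of the language of set theory and any sets x₁,…,xₙ, ψ(x₁,…,xₙ) holds in the universe of sets if and only if ‖ψ(x̂₁,…,x̂ₙ)‖^{2} = 1; and (ii) for any complete Heyting algebra A with 0 ≠ 1, for any restricted negation-free sentence φ(x₁,…,xₙ) and any sets x₁,…,xₙ, φ(x₁,…,xₙ) holds in the universe of sets if and only if ‖φ(x̂₁,…,x̂ₙ)‖^{A} = 1. -/

import Mathlib

universe u

/-- The universe `V^A` of `A`-names over a complete Heyting algebra `A`: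
an `A`-name is a function from a set (of previously constructed `A`-names)
into `A`, here encoded by an indexing type `ι`, a family `elts` of names and
the family `val` of their attached truth values. -/
inductive HName (A : Type u) : Type (u + 1) where
  | mk (ι : Type u) (elts : ι → HName A) (val : ι → A)

namespace HName

variable {A : Type u}

/-- The indexing type of (the domain of) a name. -/
def ι : HName A → Type u
  | mk ι _ _ => ι

/-- The members of (the domain of) a name. -/
def elts : (u : HName A) → u.ι → HName A
  | mk _ e _ => e

/-- The values attached by a name to the members of its domain. -/
def val : (u : HName A) → u.ι → A
  | mk _ _ v => v

/-- Ordinal rank of a name (used for the recursive definition of truth values). -/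
noncomputable def rank : HName A → Ordinal.{u}
  | mk _ e _ => Ordinal.lsub fun i => (e i).rank

theorem rank_lt {ι : Type u} (e : ι → HName A) (v : ι → A) (i : ι) :
    (e i).rank < (mk ι e v).rank := Ordinal.lt_lsub _ i

variable [Order.Frame A]

/-- The truth value `‖u ≈ v‖` of equality of two names, defined by the recursion
`‖u ≈ v‖ = ⨅_{x ∈ dom u} (u(x) ⇨ ‖x ∈ v‖) ⊓ ⨅_{y ∈ dom v} (v(y) ⇨ ‖y ∈ u‖)`,
where `‖x ∈ v‖ = ⨆_{y ∈ dom v} (v(y) ⊓ ‖y ≈ x‖)` is inlined. -/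
noncomputable def eqVal : HName A → HName A → A
  | mk ι e a, mk κ f b =>
      (⨅ i, a i ⇨ ⨆ j, b j ⊓ eqVal (f j) (e i)) ⊓
      (⨅ j, b j ⇨ ⨆ i, a i ⊓ eqVal (e i) (f j))
termination_by u v => max u.rank v.rank
decreasing_by
  · exact max_lt (lt_max_of_lt_right (rank_lt f b j)) (lt_max_of_lt_left (rank_lt e a i))
  · exact max_lt (lt_max_of_lt_left (rank_lt e a i)) (lt_max_of_lt_right (rank_lt f b j))

/-- The truth value `‖u ∈ v‖ = ⨆_{x ∈ dom v} (v(x) ⊓ ‖x ≈ u‖)` of membership. -/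
noncomputable def memVal (u v : HName A) : A :=
  ⨆ j : v.ι, v.val j ⊓ eqVal (v.elts j) u

end HName


/-- Formulas of the pure first-order language of set theory (binary predicates
`∈` and `≈`, connectives `∧`, `∨`, `→`, quantifiers `∃`, `∀`; negation-free),
with free variables among `n` de Bruijn indices; quantifiers bind the last
variable of the context. -/
inductive SFml : Nat → Type where
  | mem {n} (i j : Fin n) : SFml n
  | eq {n} (i j : Fin n) : SFml n
  | and {n} (phi psi : SFml n) : SFml n
  | or {n} (phi psi : SFml n) : SFml n
  | imp {n} (phi psi : SFml n) : SFml n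
  | ex {n} (phi : SFml (n + 1)) : SFml n
  | all {n} (phi : SFml (n + 1)) : SFml n

/-- The compositional truth value of a negation-free formula in the name
universe, with the quantifiers ranging over the names satisfying `D` (taking
`D := fun _ => True` gives the interpretation in all of `V^A`). -/
noncomputable def SFml.valIn (A : Type u) [Order.Frame A] (D : HName A → Prop) :
    {n : Nat} → SFml n → (Fin n → HName A) → A
  | _, .mem i j, rho => HName.memVal (rho i) (rho j)
  | _, .eq i j, rho => HName.eqVal (rho i) (rho j)
  | _, .and phi psi, rho => valIn A D phi rho ⊓ valIn A D psi rho
  | _, .or phi psi, rho => valIn A D phi rho ⊔ valIn A D psi rho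
  | _, .imp phi psi, rho => valIn A D phi rho ⇨ valIn A D psi rho
  | _, .ex phi, rho => ⨆ v : {v : HName A // D v}, valIn A D phi (Fin.snoc rho v.1)
  | _, .all phi, rho => ⨅ v : {v : HName A // D v}, valIn A D phi (Fin.snoc rho v.1)

/-- A formula is restricted if all its quantifiers are bounded, i.e. of the
form `∃y(y∈x ∧ …)` or `∀y(y∈x → …)`. -/
inductive SFml.Restricted : {n : Nat} → SFml n → Prop where
  | mem {n} (i j : Fin n) : Restricted (.mem i j)
  | eq {n} (i j : Fin n) : Restricted (.eq i j)
  | and {n} {phi psi : SFml n} :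
      Restricted phi → Restricted psi → Restricted (.and phi psi)
  | or {n} {phi psi : SFml n} :
      Restricted phi → Restricted psi → Restricted (.or phi psi)
  | imp {n} {phi psi : SFml n} :
      Restricted phi → Restricted psi → Restricted (.imp phi psi)
  | bex {n} (i : Fin n) {phi : SFml (n + 1)} : Restricted phi →
      Restricted (.ex (.and (.mem (Fin.last n) (Fin.castSucc i)) phi))
  | ball {n} (i : Fin n) {phi : SFml (n + 1)} : Restricted phi →
      Restricted (.all (.imp (.mem (Fin.last n) (Fin.castSucc i)) phi))

/-- The check-name of a pre-set, defined by `∈`-recursion: `x̂` has domain the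
check-names of the members of `x` and constant value `1`. -/
noncomputable def pcheck (A : Type u) [Order.Frame A] : PSet.{u} → HName A
  | .mk _ f => HName.mk _ (fun i => pcheck A (f i)) (fun _ => ⊤)

/-- The check-name `v̂ ∈ V^A` of a set `v` of the von Neumann universe
(modeled by `ZFSet`). -/
noncomputable def check (A : Type u) [Order.Frame A] (v : ZFSet.{u}) : HName A :=
  pcheck A v.out

/-- Standard Tarskian satisfaction of a set-theoretic formula in the universe
of sets, with `∈` and `≈` interpreted as membership and equality of sets. -/
def SFml.sat : {n : Nat} → SFml n → (Fin n → ZFSet.{u}) → Prop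
  | _, .mem i j, rho => rho i ∈ rho j
  | _, .eq i j, rho => rho i = rho j
  | _, .and phi psi, rho => sat phi rho ∧ sat psi rho
  | _, .or phi psi, rho => sat phi rho ∨ sat psi rho
  | _, .imp phi psi, rho => sat phi rho → sat psi rho
  | _, .ex phi, rho => ∃ v : ZFSet.{u}, sat phi (Fin.snoc rho v)
  | _, .all phi, rho => ∀ v : ZFSet.{u}, sat phi (Fin.snoc rho v)

/-!
Over `Prop` a name collapses to a set, the set of (collapses of) those members whose value
holds. Collapsing commutes with `‖∈‖`, `‖≈‖`, the connectives and both quantifiers (every set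
is the collapse of its check-name), and sends `x̂` back to `x`; so `‖ψ(x̂)‖` is just `ψ(x)`.

Over an arbitrary frame, `‖x̂ ∈ ŷ‖` and `‖x̂ ≈ ŷ‖` are `⊤` or `⊥` according to the truth.
Truth values of formulas are extensional (this rests on the transitivity of `‖≈‖`), so a bounded
quantifier `∃ y ∈ x̂`, although it ranges over all names, reduces to ranging over the check-names
of the members of `x`. By induction, `‖φ(x̂)‖` is the image of the truth of `φ(x)` under
`Prop → A`, which is `⊤` exactly when `φ(x)` holds because `⊥ ≠ ⊤`.
-/

namespace HName

variable {A : Type u}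

theorem rank_elts_lt (u : HName A) (i : u.ι) : (u.elts i).rank < u.rank := by
  cases u; exact rank_lt _ _ _

variable [Order.Frame A]

theorem memVal_def (u v : HName A) :
    memVal u v = ⨆ j, v.val j ⊓ eqVal (v.elts j) u := rfl

theorem eqVal_def (u v : HName A) :
    eqVal u v = (⨅ i, u.val i ⇨ memVal (u.elts i) v) ⊓
      (⨅ j, v.val j ⇨ memVal (v.elts j) u) := by
  cases u; cases v; rw [eqVal]; rfl

theorem eqVal_comm (u v : HName A) : eqVal u v = eqVal v u := by
  rw [eqVal_def, eqVal_def, inf_comm]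

theorem eqVal_self (u : HName A) : eqVal u u = ⊤ := by
  induction u with
  | mk ι e a ih =>
    have h : ∀ i, a i ≤ memVal (e i) (mk ι e a) := fun i =>
      le_iSup_of_le i (le_inf le_rfl (le_top.trans (ih i).ge))
    simp only [eqVal_def, inf_eq_top_iff, iInf_eq_top, himp_eq_top_iff]
    exact ⟨h, h⟩

theorem eqVal_inf_val_le_memVal (u v : HName A) (i : u.ι) :
    eqVal u v ⊓ u.val i ≤ memVal (u.elts i) v :=
  le_himp_iff.1 ((eqVal_def u v).le.trans (inf_le_left.trans (iInf_le _ i)))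

theorem eqVal_inf_memVal_le_of_trans {a b c : HName A}
    (htrans : ∀ j k, eqVal (c.elts k) (b.elts j) ⊓ eqVal (b.elts j) a ≤ eqVal (c.elts k) a) :
    eqVal b c ⊓ memVal a b ≤ memVal a c := by
  rw [memVal_def a b, inf_iSup_eq]
  refine iSup_le fun j => ?_
  calc eqVal b c ⊓ (b.val j ⊓ eqVal (b.elts j) a)
      ≤ memVal (b.elts j) c ⊓ eqVal (b.elts j) a := by
        rw [← inf_assoc]; exact inf_le_inf_right _ (eqVal_inf_val_le_memVal b c j)
    _ = ⨆ k, c.val k ⊓ (eqVal (c.elts k) (b.elts j) ⊓ eqVal (b.elts j) a) := by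
        simp only [memVal_def, iSup_inf_eq, inf_assoc]
    _ ≤ memVal a c := iSup_mono fun k => inf_le_inf_left _ (htrans j k)

/- Once the substitution steps are unfolded, every recursive call is on members of all three
names, so the maximum of the three ranks decreases. -/
theorem eqVal_trans (u v w : HName A) : eqVal u v ⊓ eqVal v w ≤ eqVal u w := by
  rw [eqVal_def u w]
  refine le_inf (le_iInf fun i => le_himp_iff.2 ?_) (le_iInf fun k => le_himp_iff.2 ?_)
  · calc eqVal u v ⊓ eqVal v w ⊓ u.val i
        ≤ eqVal v w ⊓ memVal (u.elts i) v :=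
          le_inf (inf_le_left.trans inf_le_right)
            ((inf_le_inf_right _ inf_le_left).trans (eqVal_inf_val_le_memVal u v i))
      _ ≤ memVal (u.elts i) w :=
          eqVal_inf_memVal_le_of_trans fun j k => eqVal_trans (w.elts k) (v.elts j) (u.elts i)
  · calc eqVal u v ⊓ eqVal v w ⊓ w.val k
        ≤ eqVal v u ⊓ memVal (w.elts k) v := by
          rw [eqVal_comm v u, eqVal_comm v w]
          exact le_inf (inf_le_left.trans inf_le_left)
            ((inf_le_inf_right _ inf_le_right).trans (eqVal_inf_val_le_memVal w v k))
      _ ≤ memVal (w.elts k) u :=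
          eqVal_inf_memVal_le_of_trans fun j i => eqVal_trans (u.elts i) (v.elts j) (w.elts k)
termination_by max (max u.rank v.rank) w.rank
decreasing_by
  all_goals
    refine max_lt (max_lt ?_ ?_) ?_ <;> exact (rank_elts_lt _ _).trans_le (by simp)

theorem eqVal_inf_memVal_le_left (u v w : HName A) : eqVal u v ⊓ memVal u w ≤ memVal v w := by
  rw [memVal_def, memVal_def, inf_iSup_eq]
  refine iSup_mono fun k => ?_
  rw [inf_left_comm, inf_comm (eqVal u v)]
  exact inf_le_inf_left _ (eqVal_trans _ _ _)

theorem eqVal_inf_memVal_le_right (u v w : HName A) : eqVal u v ⊓ memVal w u ≤ memVal w v :=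
  eqVal_inf_memVal_le_of_trans fun _ _ => eqVal_trans _ _ _

end HName

namespace SFml

open HName

variable {A : Type u} [Order.Frame A]

theorem inf_eqVal_le_iInf_eqVal_snoc {n : Nat} (rho rho' : Fin n → HName A) (v w : HName A) :
    (⨅ i, eqVal (rho i) (rho' i)) ⊓ eqVal v w ≤
      ⨅ i, eqVal ((Fin.snoc rho v : Fin (n + 1) → HName A) i)
        ((Fin.snoc rho' w : Fin (n + 1) → HName A) i) := by
  refine le_iInf fun i => Fin.lastCases ?_ (fun i => ?_) i
  · simpa only [Fin.snoc_last] using inf_le_right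
  · simpa only [Fin.snoc_castSucc] using inf_le_left.trans (iInf_le _ i)

theorem iInf_eqVal_le_iInf_eqVal_snoc {n : Nat} (rho rho' : Fin n → HName A) (v : HName A) :
    ⨅ i, eqVal (rho i) (rho' i) ≤
      ⨅ i, eqVal ((Fin.snoc rho v : Fin (n + 1) → HName A) i)
        ((Fin.snoc rho' v : Fin (n + 1) → HName A) i) := by
  simpa only [eqVal_self, inf_top_eq] using inf_eqVal_le_iInf_eqVal_snoc rho rho' v v

theorem inf_valIn_le_valIn (D : HName A → Prop) {n : Nat} (phi : SFml n)
    (rho rho' : Fin n → HName A) :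
    (⨅ i, eqVal (rho i) (rho' i)) ⊓ valIn A D phi rho ≤ valIn A D phi rho' := by
  induction phi with
  | mem i j =>
    calc (⨅ i, eqVal (rho i) (rho' i)) ⊓ memVal (rho i) (rho j)
        ≤ eqVal (rho j) (rho' j) ⊓ (eqVal (rho i) (rho' i) ⊓ memVal (rho i) (rho j)) :=
          le_inf (inf_le_left.trans (iInf_le _ j)) (inf_le_inf_right _ (iInf_le _ i))
      _ ≤ eqVal (rho j) (rho' j) ⊓ memVal (rho' i) (rho j) :=
          inf_le_inf_left _ (eqVal_inf_memVal_le_left _ _ _)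
      _ ≤ memVal (rho' i) (rho' j) := eqVal_inf_memVal_le_right _ _ _
  | eq i j =>
    calc (⨅ i, eqVal (rho i) (rho' i)) ⊓ eqVal (rho i) (rho j)
        ≤ eqVal (rho' i) (rho i) ⊓ eqVal (rho i) (rho j) ⊓ eqVal (rho j) (rho' j) := by
          rw [eqVal_comm (rho' i)]
          exact le_inf (inf_le_inf_right _ (iInf_le _ i)) (inf_le_left.trans (iInf_le _ j))
      _ ≤ eqVal (rho' i) (rho' j) :=
          (inf_le_inf_right _ (eqVal_trans _ _ _)).trans (eqVal_trans _ _ _)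
  | and phi psi ihphi ihpsi =>
    exact le_inf ((inf_le_inf_left _ inf_le_left).trans (ihphi rho rho'))
      ((inf_le_inf_left _ inf_le_right).trans (ihpsi rho rho'))
  | or phi psi ihphi ihpsi =>
    rw [valIn, inf_sup_left]
    exact sup_le_sup (ihphi rho rho') (ihpsi rho rho')
  | imp phi psi ihphi ihpsi =>
    have hsymm : (⨅ i, eqVal (rho i) (rho' i)) = ⨅ i, eqVal (rho' i) (rho i) := by
      simp only [eqVal_comm]
    rw [valIn, valIn, le_himp_iff]
    calc (⨅ i, eqVal (rho i) (rho' i)) ⊓ (valIn A D phi rho ⇨ valIn A D psi rho) ⊓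
          valIn A D phi rho'
        ≤ (⨅ i, eqVal (rho i) (rho' i)) ⊓
            ((valIn A D phi rho ⇨ valIn A D psi rho) ⊓ valIn A D phi rho) := by
          refine le_inf (inf_le_left.trans inf_le_left) (le_inf (inf_le_left.trans inf_le_right) ?_)
          rw [inf_right_comm, hsymm]
          exact inf_le_left.trans (ihphi rho' rho)
      _ ≤ valIn A D psi rho' := (inf_le_inf_left _ himp_inf_le).trans (ihpsi rho rho')
  | ex phi ih =>
    rw [valIn, valIn, inf_iSup_eq]
    exact iSup_mono fun v =>
      (inf_le_inf_right _ (iInf_eqVal_le_iInf_eqVal_snoc _ _ v.1)).trans (ih _ _)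
  | all phi ih =>
    rw [valIn, valIn]
    exact le_iInf fun v =>
      (inf_le_inf (iInf_eqVal_le_iInf_eqVal_snoc _ _ v.1) (iInf_le _ v)).trans (ih _ _)

end SFml

def truthVal (A : Type*) [CompleteLattice A] (p : Prop) : A := ⨆ _ : p, ⊤

section TruthVal

variable {A : Type*}

theorem truthVal_of_true [CompleteLattice A] {p : Prop} (hp : p) : truthVal A p = ⊤ :=
  iSup_pos hp

theorem truthVal_of_false [CompleteLattice A] {p : Prop} (hp : ¬p) : truthVal A p = ⊥ :=
  iSup_neg hp

theorem truthVal_eq_top_iff [CompleteLattice A] (hA : (⊥ : A) ≠ ⊤) {p : Prop} :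
    truthVal A p = ⊤ ↔ p := by
  by_cases hp : p
  · exact iff_of_true (truthVal_of_true hp) hp
  · exact iff_of_false (by rwa [truthVal_of_false hp]) hp

theorem truthVal_and [CompleteLattice A] (p q : Prop) :
    truthVal A (p ∧ q) = truthVal A p ⊓ truthVal A q := by
  by_cases hp : p <;> by_cases hq : q <;> simp [truthVal_of_true, truthVal_of_false, hp, hq]

theorem truthVal_or [CompleteLattice A] (p q : Prop) :
    truthVal A (p ∨ q) = truthVal A p ⊔ truthVal A q := by
  by_cases hp : p <;> by_cases hq : q <;> simp [truthVal_of_true, truthVal_of_false, hp, hq]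

theorem truthVal_imp [Order.Frame A] (p q : Prop) :
    truthVal A (p → q) = truthVal A p ⇨ truthVal A q := by
  by_cases hp : p <;> by_cases hq : q <;> simp [truthVal_of_true, truthVal_of_false, hp, hq]

theorem truthVal_exists [CompleteLattice A] {ι : Sort*} (p : ι → Prop) :
    truthVal A (∃ i, p i) = ⨆ i, truthVal A (p i) :=
  iSup_exists

theorem truthVal_forall [CompleteLattice A] {ι : Sort*} (p : ι → Prop) :
    truthVal A (∀ i, p i) = ⨅ i, truthVal A (p i) := by
  by_cases h : ∀ i, p i
  · simp [truthVal_of_true, h]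
  · obtain ⟨i, hi⟩ := not_forall.1 h
    rw [truthVal_of_false h, eq_comm, eq_bot_iff]
    exact iInf_le_of_le i (truthVal_of_false hi).le

end TruthVal

theorem ZFSet.mem_iff_exists_eq_mk_func {y v : ZFSet.{u}} :
    y ∈ v ↔ ∃ j, y = ZFSet.mk (v.out.Func j) := by
  conv_lhs => rw [← ZFSet.mk_out y, ← ZFSet.mk_out v, ZFSet.mk_mem_iff, PSet.mem_def]
  simp only [← ZFSet.eq, ZFSet.mk_out]

theorem ZFSet.iSup_mem_eq {α : Type*} [CompleteLattice α] (v : ZFSet.{u}) (g : ZFSet.{u} → α) :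
    ⨆ y ∈ v, g y = ⨆ j, g (ZFSet.mk (v.out.Func j)) := by
  simp only [ZFSet.mem_iff_exists_eq_mk_func, iSup_exists]
  rw [iSup_comm]
  simp only [iSup_iSup_eq_left]

namespace HName

variable {A : Type u} [Order.Frame A]

theorem eqVal_eq_of_eqVal_eq_top {a b : HName A} (h : eqVal a b = ⊤) (c : HName A) :
    eqVal a c = eqVal b c := by
  refine le_antisymm ?_ ?_
  · simpa [eqVal_comm b a, h] using eqVal_trans b a c
  · simpa [h] using eqVal_trans a b c

theorem memVal_pcheck (w : HName A) (x : PSet.{u}) :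
    memVal w (pcheck A x) = ⨆ j, eqVal (pcheck A (x.Func j)) w := by
  cases x
  exact iSup_congr fun _ => top_inf_eq _

theorem pcheck_eqVal (x y : PSet.{u}) :
    eqVal (pcheck A x) (pcheck A y) = truthVal A (x.Equiv y) := by
  induction x generalizing y with
  | mk α f ih =>
    have ih' : ∀ i y, eqVal (pcheck A y) (pcheck A (f i)) = truthVal A ((f i).Equiv y) :=
      fun i y => by rw [eqVal_comm, ih]
    cases y with
    | mk β g =>
    change _ = truthVal A ((∀ i, ∃ j, (f i).Equiv (g j)) ∧ ∀ j, ∃ i, (f i).Equiv (g j))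
    rw [pcheck, pcheck, eqVal]
    simp only [top_himp, top_inf_eq, ih, ih', truthVal_and, truthVal_forall, truthVal_exists]

theorem pcheck_memVal (x y : PSet.{u}) :
    memVal (pcheck A x) (pcheck A y) = truthVal A (x ∈ y) := by
  rw [memVal_pcheck, PSet.mem_def, truthVal_exists]
  exact iSup_congr fun j => by rw [pcheck_eqVal, PSet.Equiv.comm]

theorem check_eqVal (v w : ZFSet.{u}) :
    eqVal (check A v) (check A w) = truthVal A (v = w) := by
  rw [check, check, pcheck_eqVal, ← ZFSet.eq, ZFSet.mk_out, ZFSet.mk_out]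

theorem check_memVal (v w : ZFSet.{u}) :
    memVal (check A v) (check A w) = truthVal A (v ∈ w) := by
  rw [check, check, pcheck_memVal, ← ZFSet.mk_mem_iff, ZFSet.mk_out, ZFSet.mk_out]

theorem eqVal_pcheck_check_mk (x : PSet.{u}) : eqVal (pcheck A x) (check A (ZFSet.mk x)) = ⊤ := by
  rw [check, pcheck_eqVal]
  exact truthVal_of_true (ZFSet.eq.1 (ZFSet.mk_out _).symm)

theorem memVal_check (w : HName A) (v : ZFSet.{u}) :
    memVal w (check A v) = ⨆ y ∈ v, eqVal (check A y) w := by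
  rw [ZFSet.iSup_mem_eq, check, memVal_pcheck]
  exact iSup_congr fun j => eqVal_eq_of_eqVal_eq_top (eqVal_pcheck_check_mk _) w

def Extensional (F : HName A → A) : Prop := ∀ a b, eqVal a b ⊓ F a ≤ F b

section Extensional

variable {F : HName A → A}

theorem iSup_eqVal_inf_eq (hF : Extensional F) (a : HName A) : ⨆ w, eqVal a w ⊓ F w = F a := by
  refine le_antisymm (iSup_le fun w => ?_) (le_iSup_of_le a (by rw [eqVal_self, top_inf_eq]))
  rw [eqVal_comm]
  exact hF w a

theorem iInf_eqVal_himp_eq (hF : Extensional F) (a : HName A) :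
    ⨅ w, (eqVal a w ⇨ F w) = F a :=
  le_antisymm (iInf_le_of_le a (by rw [eqVal_self, top_himp]))
    (le_iInf fun w => le_himp_iff.2 (inf_comm (F a) _ ▸ hF a w))

theorem iSup_memVal_check_inf (hF : Extensional F) (v : ZFSet.{u}) :
    ⨆ w, memVal w (check A v) ⊓ F w = ⨆ y ∈ v, F (check A y) := by
  simp only [memVal_check, iSup_inf_eq]
  rw [iSup_comm]
  refine iSup_congr fun y => ?_
  rw [iSup_comm]
  exact iSup_congr fun _ => iSup_eqVal_inf_eq hF _

theorem iInf_memVal_check_himp (hF : Extensional F) (v : ZFSet.{u}) :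
    ⨅ w, (memVal w (check A v) ⇨ F w) = ⨅ y ∈ v, F (check A y) := by
  simp only [memVal_check, iSup_himp_eq]
  rw [iInf_comm]
  refine iInf_congr fun y => ?_
  rw [iInf_comm]
  exact iInf_congr fun _ => iInf_eqVal_himp_eq hF _

end Extensional

end HName

theorem Fin.snoc_map {α β : Type*} {n : Nat} (g : α → β) (q : Fin n → α) (y : α) :
    (Fin.snoc (fun i => g (q i)) (g y) : Fin (n + 1) → β) =
      fun i => g ((Fin.snoc q y : Fin (n + 1) → α) i) :=
  (Fin.comp_snoc g q y).symm

namespace SFml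

open HName

variable {A : Type u} [Order.Frame A]

theorem extensional_valIn_snoc (D : HName A → Prop) {n : Nat} (phi : SFml (n + 1))
    (rho : Fin n → HName A) : Extensional fun v => valIn A D phi (Fin.snoc rho v) := by
  intro a b
  refine le_trans (inf_le_inf_right _ ?_) (inf_valIn_le_valIn D phi _ _)
  simpa only [eqVal_self, iInf_top, top_inf_eq] using inf_eqVal_le_iInf_eqVal_snoc rho rho a b

theorem valIn_ex_univ {n : Nat} (phi : SFml (n + 1)) (rho : Fin n → HName A) :
    valIn A (fun _ => True) phi.ex rho = ⨆ v, valIn A (fun _ => True) phi (Fin.snoc rho v) :=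
  (Equiv.subtypeUnivEquiv fun _ => trivial).iSup_comp (g := fun v => valIn A _ phi (Fin.snoc rho v))

theorem valIn_all_univ {n : Nat} (phi : SFml (n + 1)) (rho : Fin n → HName A) :
    valIn A (fun _ => True) phi.all rho = ⨅ v, valIn A (fun _ => True) phi (Fin.snoc rho v) :=
  (Equiv.subtypeUnivEquiv fun _ => trivial).iInf_comp (g := fun v => valIn A _ phi (Fin.snoc rho v))

theorem valIn_check_eq_truthVal {n : Nat} {phi : SFml n} (hphi : phi.Restricted)
    (x : Fin n → ZFSet.{u}) :
    valIn A (fun _ => True) phi (fun i => check A (x i)) = truthVal A (phi.sat x) := by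
  induction hphi with
  | mem i j => exact check_memVal _ _
  | eq i j => exact check_eqVal _ _
  | and _ _ ihphi ihpsi => simp only [valIn, sat, ihphi, ihpsi, truthVal_and]
  | or _ _ ihphi ihpsi => simp only [valIn, sat, ihphi, ihpsi, truthVal_or]
  | imp _ _ ihphi ihpsi => simp only [valIn, sat, ihphi, ihpsi, truthVal_imp]
  | bex i _ ih =>
    rw [valIn_ex_univ]
    simp only [valIn, sat, Fin.snoc_last, Fin.snoc_castSucc]
    rw [iSup_memVal_check_inf (extensional_valIn_snoc _ _ _)]
    simp only [Fin.snoc_map (check A), ih, ← truthVal_exists, exists_prop]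
  | ball i _ ih =>
    rw [valIn_all_univ]
    simp only [valIn, sat, Fin.snoc_last, Fin.snoc_castSucc]
    rw [iInf_memVal_check_himp (extensional_valIn_snoc _ _ _)]
    simp only [Fin.snoc_map (check A), ih, ← truthVal_forall]

end SFml

namespace HName

def toPSet : HName Prop → PSet.{0}
  | mk _ e a => PSet.mk {i // a i} fun i => toPSet (e i.1)

noncomputable def toZFSet (u : HName Prop) : ZFSet.{0} := ZFSet.mk u.toPSet

theorem eqVal_iff_equiv_toPSet (u v : HName Prop) : eqVal u v ↔ u.toPSet.Equiv v.toPSet := by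
  induction u generalizing v with
  | mk ι e a ih =>
    have ih' : ∀ i v, eqVal v (e i) ↔ (e i).toPSet.Equiv v.toPSet := fun i v => by
      rw [eqVal_comm, ih]
    cases v with
    | mk κ f b =>
    rw [eqVal, toPSet, toPSet]
    change _ ↔ (∀ i : {i // a i}, ∃ j : {j // b j}, _) ∧ ∀ j : {j // b j}, ∃ i : {i // a i}, _
    simp only [iInf_Prop_eq, iSup_Prop_eq, inf_Prop_eq, himp_iff_imp, ih, ih', Subtype.forall,
      Subtype.exists, exists_prop]

theorem memVal_iff_mem_toPSet (u v : HName Prop) : memVal u v ↔ u.toPSet ∈ v.toPSet := by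
  cases v with
  | mk κ f b =>
  rw [toPSet, PSet.mem_def]
  change (⨆ j, b j ⊓ eqVal (f j) u) ↔ ∃ j : {j // b j}, u.toPSet.Equiv (f j.1).toPSet
  simp only [iSup_Prop_eq, inf_Prop_eq, eqVal_iff_equiv_toPSet, PSet.Equiv.comm (x := u.toPSet),
    Subtype.exists, exists_prop]

theorem toPSet_pcheck_equiv (x : PSet.{0}) : (pcheck Prop x).toPSet.Equiv x := by
  induction x with
  | mk α f ih =>
    rw [pcheck, toPSet]
    exact ⟨fun i => ⟨i.1, ih i.1⟩, fun i => ⟨⟨i, trivial⟩, ih i⟩⟩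

theorem toZFSet_check (v : ZFSet.{0}) : (check Prop v).toZFSet = v := by
  rw [toZFSet, check, ZFSet.eq.2 (toPSet_pcheck_equiv _), ZFSet.mk_out]

theorem toZFSet_surjective : Function.Surjective toZFSet :=
  fun v => ⟨check Prop v, toZFSet_check v⟩

end HName

theorem SFml.sat_toZFSet_iff {n : Nat} (phi : SFml n) (rho : Fin n → HName Prop) :
    phi.sat (fun i => (rho i).toZFSet) ↔ valIn Prop (fun _ => True) phi rho := by
  induction phi with
  | mem i j => exact (HName.memVal_iff_mem_toPSet _ _).symm
  | eq i j => exact ZFSet.eq.trans (HName.eqVal_iff_equiv_toPSet _ _).symm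
  | and _ _ ihphi ihpsi => simp only [sat, valIn, ihphi, ihpsi, inf_Prop_eq]
  | or _ _ ihphi ihpsi => simp only [sat, valIn, ihphi, ihpsi, sup_Prop_eq]
  | imp _ _ ihphi ihpsi => simp only [sat, valIn, ihphi, ihpsi, himp_iff_imp]
  | ex _ ih =>
    rw [valIn_ex_univ, iSup_Prop_eq, sat, HName.toZFSet_surjective.exists]
    simp only [Fin.snoc_map HName.toZFSet, ih]
  | all _ ih =>
    rw [valIn_all_univ, iInf_Prop_eq, sat, HName.toZFSet_surjective.forall]
    simp only [Fin.snoc_map HName.toZFSet, ih]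

/-- Absoluteness of check-names: (i) over the two-element Boolean algebra
(modeled by `Prop`), a negation-free sentence with set parameters holds in the
universe of sets iff its truth value at the check-name parameters is `1`; and
(ii) over any complete Heyting algebra `A` with `0 ≠ 1`, the same holds for
every restricted negation-free sentence. -/
theorem check_absoluteness :
    (∀ {n : Nat} (psi : SFml n) (x : Fin n → ZFSet.{0}),
        psi.sat x ↔
          SFml.valIn Prop (fun _ => True) psi (fun i => check Prop (x i)) = ⊤) ∧
      ∀ (A : Type u) [Order.Frame A], (⊥ : A) ≠ ⊤ →
        ∀ {n : Nat} (phi : SFml n), phi.Restricted →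
          ∀ x : Fin n → ZFSet.{u},
            phi.sat x ↔
              SFml.valIn A (fun _ => True) phi (fun i => check A (x i)) = ⊤ := by
  refine ⟨fun psi x => ?_, fun A _ hA _ phi hphi x => ?_⟩
  · have h := psi.sat_toZFSet_iff fun i => check Prop (x i)
    simp only [HName.toZFSet_check] at h
    rw [h, Prop.top_eq_true, eq_iff_iff, iff_true]
  · rw [SFml.valIn_check_eq_truthVal hphi, truthVal_eq_top_iff hA]
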